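/- arXiv:2604.09342 — 3 statements merged into one kernel-verified Lean document; each statement's English description precedes it below -/
import Mathlib

section
/- With the notation δ_l(Δ) = (ρ + λ + μ_l + Δ)(ρ̂ + μ̂)/((ρ + λ + μ_l)(ρ + μ_l + Δ)) and δ_h(Δ) = (ρ̂ + μ̂)/(ρ + μ_l + Δ), for every Δ ≥ 0 the derivatives satisfy |δ_h'(Δ)| = C · |δ_l'(Δ)| where C = (ρ + λ + μ_l)/λ. In particular, since C > 1, the post-shock money's worth is more sensitive to the shock size than the pre-shock money's worth. -/
theorem moneys_worth_sensitivity
    (ρ ρhat μl μhat lam : ℝ)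
    (hρ : 0 < ρ) (hρhat : 0 < ρhat) (hμl : 0 < μl) (hμhat : 0 < μhat)
    (hlam : 0 < lam)
    (δl δh : ℝ → ℝ)
    (hδl : δl = fun Δ =>
      (ρ + lam + μl + Δ) * (ρhat + μhat) / ((ρ + lam + μl) * (ρ + μl + Δ)))
    (hδh : δh = fun Δ => (ρhat + μhat) / (ρ + μl + Δ))
    (C : ℝ) (hC : C = (ρ + lam + μl) / lam) :
    (∀ Δ : ℝ, 0 ≤ Δ → |deriv δh Δ| = C * |deriv δl Δ|) ∧ 1 < C := by
  have hCpos : 0 < C := by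
    rw [hC]; positivity
  constructor
  · intro Δ hΔ
    have hb : 0 < ρ + μl + Δ := by linarith
    have hbne : ρ + μl + Δ ≠ 0 := ne_of_gt hb
    have hk : 0 < ρ + lam + μl := by linarith
    have hkne : ρ + lam + μl ≠ 0 := ne_of_gt hk
    have hdenne : (ρ + lam + μl) * (ρ + μl + Δ) ≠ 0 := mul_ne_zero hkne hbne
    -- derivative of δh
    have hden : HasDerivAt (fun x : ℝ => ρ + μl + x) 1 Δ := by
      simpa using (hasDerivAt_id Δ).const_add (ρ + μl)
    have hh : HasDerivAt δh
        ((0 * (ρ + μl + Δ) - (ρhat + μhat) * 1) / (ρ + μl + Δ) ^ 2) Δ := by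
      rw [hδh]
      exact (hasDerivAt_const Δ (ρhat + μhat)).div hden hbne
    -- derivative of δl
    have hnum : HasDerivAt (fun x : ℝ => (ρ + lam + μl + x) * (ρhat + μhat))
        (1 * (ρhat + μhat)) Δ := by
      have : HasDerivAt (fun x : ℝ => ρ + lam + μl + x) 1 Δ := by
        simpa using (hasDerivAt_id Δ).const_add (ρ + lam + μl)
      simpa using this.mul_const (ρhat + μhat)
    have hden2 : HasDerivAt (fun x : ℝ => (ρ + lam + μl) * (ρ + μl + x))
        ((ρ + lam + μl) * 1) Δ := hden.const_mul _
    have hl : HasDerivAt δl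
        ((1 * (ρhat + μhat) * ((ρ + lam + μl) * (ρ + μl + Δ)) -
          (ρ + lam + μl + Δ) * (ρhat + μhat) * ((ρ + lam + μl) * 1)) /
          ((ρ + lam + μl) * (ρ + μl + Δ)) ^ 2) Δ := by
      rw [hδl]
      exact hnum.div hden2 hdenne
    rw [hh.deriv, hl.deriv]
    have e1 : (0 * (ρ + μl + Δ) - (ρhat + μhat) * 1) / (ρ + μl + Δ) ^ 2 =
        -((ρhat + μhat) / (ρ + μl + Δ) ^ 2) := by ring
    have e2 : (1 * (ρhat + μhat) * ((ρ + lam + μl) * (ρ + μl + Δ)) -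
          (ρ + lam + μl + Δ) * (ρhat + μhat) * ((ρ + lam + μl) * 1)) /
          ((ρ + lam + μl) * (ρ + μl + Δ)) ^ 2 =
        -((ρhat + μhat) * lam / ((ρ + lam + μl) * (ρ + μl + Δ) ^ 2)) := by
      field_simp
      ring
    rw [e1, e2, abs_neg, abs_neg, abs_of_pos (by positivity), abs_of_pos (by positivity), hC]
    field_simp
  · rw [hC]
    rw [lt_div_iff₀ hlam]
    linarith
end

section
/- Let K > 0, δ > β > 0 (real numbers), and γ^+ > 1. Define x⁴ = δKγ^+/((γ^+ − 1)(δ − β)) and ζ⁴ = (δK/(γ^+ − 1))^{1−γ^+} ((δ − β)/γ^+)^{γ^+}. Then x⁴ > 0, ζ⁴ > 0, and the pair (x⁴, ζ⁴) satisfies both the value-matching condition β x⁴ + ζ⁴ (x⁴)^{γ^+} = δ(x⁴ − K) and the smooth-pasting condition β + ζ⁴ γ^+ (x⁴)^{γ^+ − 1} = δ. -/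
theorem smooth_fit_tax_case
    (K δ β γp : ℝ) (hK : 0 < K) (hβ : 0 < β) (hδβ : β < δ) (hγ : 1 < γp)
    (x4 ζ4 : ℝ)
    (hx4 : x4 = δ * K * γp / ((γp - 1) * (δ - β)))
    (hζ4 : ζ4 = (δ * K / (γp - 1)) ^ (1 - γp) * ((δ - β) / γp) ^ γp) :
    0 < x4 ∧ 0 < ζ4 ∧
      β * x4 + ζ4 * x4 ^ γp = δ * (x4 - K) ∧
      β + ζ4 * γp * x4 ^ (γp - 1) = δ := by
  have hδ : 0 < δ := hβ.trans hδβ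
  have hγ1 : 0 < γp - 1 := by linarith
  have hγ0 : 0 < γp := by linarith
  have hδβ' : 0 < δ - β := by linarith
  set a : ℝ := δ * K / (γp - 1) with ha_def
  set b : ℝ := (δ - β) / γp with hb_def
  have ha : 0 < a := by positivity
  have hb : 0 < b := by positivity
  have hxab : x4 = a / b := by
    rw [hx4, ha_def, hb_def]
    field_simp
  have hx4pos : 0 < x4 := by rw [hxab]; positivity
  have hζpos : 0 < ζ4 := by
    rw [hζ4]
    have := Real.rpow_pos_of_pos ha (1 - γp)
    have := Real.rpow_pos_of_pos hb γp
    positivity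
  have hbγ : (0:ℝ) < b ^ γp := Real.rpow_pos_of_pos hb γp
  have hbγ1 : (0:ℝ) < b ^ (γp - 1) := Real.rpow_pos_of_pos hb (γp - 1)
  have h1 : ζ4 * x4 ^ γp = a := by
    rw [hζ4, hxab, Real.div_rpow ha.le hb.le]
    rw [show a ^ (1 - γp) * b ^ γp * (a ^ γp / b ^ γp)
        = a ^ (1 - γp) * a ^ γp * (b ^ γp / b ^ γp) from by ring]
    rw [div_self hbγ.ne', mul_one, ← Real.rpow_add ha]
    norm_num
  have h2 : ζ4 * γp * x4 ^ (γp - 1) = δ - β := by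
    rw [hζ4, hxab, Real.div_rpow ha.le hb.le]
    rw [show a ^ (1 - γp) * b ^ γp * γp * (a ^ (γp - 1) / b ^ (γp - 1))
        = γp * (a ^ (1 - γp) * a ^ (γp - 1)) * (b ^ γp / b ^ (γp - 1)) from by ring]
    rw [← Real.rpow_add ha, ← Real.rpow_sub hb]
    norm_num
    rw [hb_def]
    field_simp
  refine ⟨hx4pos, hζpos, ?_, by linarith⟩
  rw [h1, hx4, ha_def]
  field_simp
  ring
end

section
/- Let K > 0, δ > β, γ^+ > 1, and let x⁴ = δKγ^+/((γ^+ − 1)(δ − β)) and ζ⁴ = (δK/(γ^+ − 1))^{1−γ^+} ((δ − β)/γ^+)^{γ^+}. Then for every x with 0 < x < x⁴, the continuation value strictly dominates the stopping payoff: βx + ζ⁴ x^{γ^+} > δ(x − K). -/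
/-! The gap `βx + ζ⁴x^γ − δ(x − K)` is, after the substitution `t = x / x⁴`, a positive multiple
of `t^γ − (1 + γ(t − 1))`: the distance of the strictly convex function `t^γ` from its tangent
line at `t = 1`, which is the point `x = x⁴` of smooth fit. Bernoulli's strict inequality makes
this positive for every `t ≥ 0` other than `1`. -/

open Real

lemma one_add_mul_sub_one_lt_rpow {t γ : ℝ} (ht : 0 ≤ t) (ht1 : t ≠ 1) (hγ : 1 < γ) :
    1 + γ * (t - 1) < t ^ γ := by
  simpa using one_add_mul_self_lt_rpow_one_add (by linarith) (sub_ne_zero.mpr ht1) hγ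

lemma rpow_one_sub_mul_rpow_mul_rpow {A B x γ : ℝ} (hA : 0 < A) (hB : 0 ≤ B) (hx : 0 ≤ x) :
    A ^ (1 - γ) * B ^ γ * x ^ γ = A * (B * x / A) ^ γ := by
  rw [div_rpow (by positivity) hA.le, mul_rpow hB hx, rpow_sub hA, rpow_one]
  field_simp

lemma mul_sub_lt_rpow_of_ne {A B x γ : ℝ} (hA : 0 < A) (hB : 0 < B) (hγ : 1 < γ) (hx : 0 ≤ x)
    (hxAB : x ≠ A / B) :
    γ * B * x - (γ - 1) * A < A ^ (1 - γ) * B ^ γ * x ^ γ := by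
  have ht1 : B * x / A ≠ 1 := by
    rw [Ne, div_eq_one_iff_eq hA.ne']
    exact fun h ↦ hxAB (by rw [eq_div_iff hB.ne', mul_comm, h])
  have hbern := one_add_mul_sub_one_lt_rpow (by positivity) ht1 hγ
  rw [rpow_one_sub_mul_rpow_mul_rpow hA hB.le hx]
  calc γ * B * x - (γ - 1) * A = A * (1 + γ * (B * x / A - 1)) := by field_simp; ring
    _ < A * (B * x / A) ^ γ := mul_lt_mul_of_pos_left hbern hA

theorem continuation_dominates_general
    (K δ β γp : ℝ) (hδβ : β < δ) (hγ : 1 < γp)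
    (x4 ζ4 : ℝ)
    (hx4 : x4 = δ * K * γp / ((γp - 1) * (δ - β)))
    (hζ4 : ζ4 = (δ * K / (γp - 1)) ^ (1 - γp) * ((δ - β) / γp) ^ γp) :
    ∀ x : ℝ, 0 < x → x < x4 → δ * (x - K) < β * x + ζ4 * x ^ γp := by
  intro x hx hxlt
  have hγ1 : 0 < γp - 1 := sub_pos.mpr hγ
  have hB : 0 < (δ - β) / γp := div_pos (sub_pos.mpr hδβ) (by linarith)
  have hx4_eq : x4 = δ * K / (γp - 1) / ((δ - β) / γp) := by
    rw [hx4]; field_simp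
  have hA : 0 < δ * K / (γp - 1) := by
    have hx4pos : 0 < x4 := hx.trans hxlt
    rw [hx4_eq] at hx4pos
    exact (div_pos_iff_of_pos_right hB).mp hx4pos
  have htangent := mul_sub_lt_rpow_of_ne hA hB hγ hx.le (hx4_eq ▸ hxlt.ne)
  rw [hζ4]
  field_simp at htangent
  linarith

theorem continuation_dominates
    (K δ β γp : ℝ) (hK : 0 < K) (hδβ : β < δ) (hγ : 1 < γp)
    (x4 ζ4 : ℝ)
    (hx4 : x4 = δ * K * γp / ((γp - 1) * (δ - β)))
    (hζ4 : ζ4 = (δ * K / (γp - 1)) ^ (1 - γp) * ((δ - β) / γp) ^ γp) :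
    ∀ x : ℝ, 0 < x → x < x4 → δ * (x - K) < β * x + ζ4 * x ^ γp :=
  continuation_dominates_general K δ β γp hδβ hγ x4 ζ4 hx4 hζ4
end
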